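/- arXiv:2512.15591 — 3 statements merged into one kernel-verified Lean document; each statement's English description precedes it below -/
import Mathlib

section
/- Let Γ be a connected graph with path metric d, and let X be a set of vertices of Γ with finite boundary width bounded by K, meaning: for every path e₁e₂…e_m in Γ whose initial vertex x and terminal vertex y lie in X and all of whose intermediate vertices lie outside X, one has d(x,y) ≤ K. Let X_r be the cover of X by balls of radius r. Then X_r has boundary width at most 2r + K. -/
/-!
Let `x, y ∈ X_r` be joined by a walk whose interior avoids `X_r`. Walk from `x` along a geodesic
towards a point of `X` at distance `≤ r`, and stop at the first vertex `c ∈ X`; do the same from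
`y`, stopping at `d ∈ X`. Gluing these two segments to the given walk yields a walk from `c` to `d`
whose interior avoids `X`, so `dist c d ≤ K`, and the triangle inequality through `c` and `d`
gives `dist x y ≤ r + K + r`.
-/

namespace SimpleGraph.Walk

variable {V : Type*} {G : SimpleGraph V} {X Y : Set V} {a b c : V}

def IsBoundaryWalk (X : Set V) (w : G.Walk a b) : Prop :=
  ∀ v ∈ w.support, v ≠ a → v ≠ b → v ∉ X

lemma IsBoundaryWalk.mono {w : G.Walk a b} (hw : w.IsBoundaryWalk Y) (hXY : X ⊆ Y) :
    w.IsBoundaryWalk X :=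
  fun v hv hva hvb hvX => hw v hv hva hvb (hXY hvX)

lemma IsBoundaryWalk.reverse {w : G.Walk a b} (hw : w.IsBoundaryWalk X) :
    w.reverse.IsBoundaryWalk X := by
  intro v hv hvb hva
  exact hw v (List.mem_reverse.mp (w.support_reverse ▸ hv)) hva hvb

lemma isBoundaryWalk_append {p : G.Walk a b} {w : G.Walk b c}
    (hp : ∀ v ∈ p.support, v ≠ a → v ∉ X) (hw : w.IsBoundaryWalk X) :
    (p.append w).IsBoundaryWalk X := by
  intro v hv hva hvc
  rcases (mem_support_append_iff _ _).mp hv with hv | hv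
  · exact hp v hv hva
  · by_cases hvb : v = b
    · exact hp v (hvb ▸ p.end_mem_support) hva
    · exact hw v hv hvb hvc

lemma exists_walk_from_mem_avoiding (p : G.Walk a b) (hb : b ∈ X) :
    ∃ c ∈ X, ∃ q : G.Walk c a, q.length ≤ p.length ∧ ∀ v ∈ q.support, v ≠ c → v ∉ X := by
  induction p with
  | nil => exact ⟨_, hb, nil, le_rfl, by simp⟩
  | @cons a a' b h p ih =>
    by_cases ha : a ∈ X
    · exact ⟨a, ha, nil, Nat.zero_le _, by simp⟩
    obtain ⟨c, hc, q, hlen, hq⟩ := ih hb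
    refine ⟨c, hc, q.concat h.symm, by simpa using hlen, fun v hv hvc => ?_⟩
    rcases List.mem_append.mp (q.support_concat h.symm ▸ hv) with hv | hv
    · exact hq v hv hvc
    · exact List.mem_singleton.mp hv ▸ ha

end SimpleGraph.Walk

open SimpleGraph SimpleGraph.Walk

lemma SimpleGraph.Connected.exists_walk_from_mem_avoiding {V : Type*} {G : SimpleGraph V}
    (hG : G.Connected) {X : Set V} {r : ℕ} {a : V} (ha : ∃ b ∈ X, G.dist a b ≤ r) :
    ∃ c ∈ X, G.dist c a ≤ r ∧ ∃ q : G.Walk c a, ∀ v ∈ q.support, v ≠ c → v ∉ X := by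
  obtain ⟨b, hb, hab⟩ := ha
  obtain ⟨p, hp⟩ := hG.exists_walk_length_eq_dist a b
  obtain ⟨c, hc, q, hlen, hq⟩ := p.exists_walk_from_mem_avoiding hb
  exact ⟨c, hc, (dist_le q).trans (by omega), q, hq⟩

/-- If a vertex set `X` of a connected graph has boundary width at most `K`, then
its ball cover of radius `r` has boundary width at most `2r + K`. -/
theorem ballCover_boundaryWidth {V : Type*} (G : SimpleGraph V) (hG : G.Connected)
    (X : Set V) (K r : ℕ)
    (hK : ∀ x y : V, x ∈ X → y ∈ X → ∀ w : G.Walk x y,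
      (∀ v ∈ w.support, v ≠ x → v ≠ y → v ∉ X) → G.dist x y ≤ K) :
    ∀ x y : V, x ∈ {u : V | ∃ v ∈ X, G.dist u v ≤ r} →
      y ∈ {u : V | ∃ v ∈ X, G.dist u v ≤ r} →
      ∀ w : G.Walk x y,
        (∀ v ∈ w.support, v ≠ x → v ≠ y → v ∉ {u : V | ∃ v' ∈ X, G.dist u v' ≤ r}) →
        G.dist x y ≤ 2 * r + K := by
  intro x y hx hy w hw
  obtain ⟨c, hc, hcx, p, hp⟩ := hG.exists_walk_from_mem_avoiding hx
  obtain ⟨d, hd, hdy, q, hq⟩ := hG.exists_walk_from_mem_avoiding hy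
  have hwX : w.IsBoundaryWalk X :=
    IsBoundaryWalk.mono hw fun u hu => ⟨u, hu, by simp⟩
  have hdc : G.dist d c ≤ K :=
    hK d c hd hc _ (isBoundaryWalk_append hq (isBoundaryWalk_append hp hwX).reverse)
  calc G.dist x y ≤ G.dist x c + G.dist c d + G.dist d y := by
        grw [hG.dist_triangle, hG.dist_triangle (u := x)]
    _ = G.dist c x + G.dist d c + G.dist d y := by
        rw [dist_comm (u := x), dist_comm (u := c) (v := d)]
    _ ≤ 2 * r + K := by omega
end

section
/- Let Γ be a connected graph with path metric d, let Δ ⊆ V(Γ), let Δ_κ be the cover of Δ by balls of radius κ, and suppose that every boundary pair of Δ is at distance at most κ (i.e. Δ has boundary width at most κ). Then for any two vertices x, y ∈ Δ joined by a path in Γ, there is a path from x to y all of whose vertices lie in Δ_κ. -/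
open SimpleGraph

private lemma aux_ballCover {V : Type*} (G : SimpleGraph V) (Δ : Set V) (κ : ℕ)
    (hκ : ∀ x y : V, x ∈ Δ → y ∈ Δ → ∀ w : G.Walk x y,
      (∀ v ∈ w.support, v ≠ x → v ≠ y → v ∉ Δ) → G.dist x y ≤ κ) :
    ∀ n : ℕ, ∀ x y : V, x ∈ Δ → y ∈ Δ → ∀ w : G.Walk x y, w.length ≤ n →
      ∃ w' : G.Walk x y, ∀ v ∈ w'.support, ∃ t ∈ Δ, G.dist v t ≤ κ := by
  intro n
  classical
  induction n with
  | zero =>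
    intro x y hx hy w hw
    have hlen : w.length = 0 := Nat.le_zero.mp hw
    refine ⟨w, ?_⟩
    intro v hv
    have : w.support = [x] := by
      cases w with
      | nil => simp
      | cons h p => simp at hlen
    rw [this] at hv
    simp at hv
    exact ⟨x, hx, by simp [hv, SimpleGraph.dist_self]⟩
  | succ n ih =>
    intro x y hx hy w hw
    by_cases hint : ∀ v ∈ w.support, v ≠ x → v ≠ y → v ∉ Δ
    · -- geodesic replacement
      have hd : G.dist x y ≤ κ := hκ x y hx hy w hint
      obtain ⟨p, hp⟩ := (Walk.reachable w).exists_walk_length_eq_dist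
      refine ⟨p, ?_⟩
      intro v hv
      refine ⟨x, hx, ?_⟩
      have h1 : G.dist x v ≤ (p.takeUntil v hv).length := dist_le _
      have h2 : (p.takeUntil v hv).length ≤ p.length := Walk.length_takeUntil_le p hv
      rw [G.dist_comm]
      omega
    · push_neg at hint
      obtain ⟨v, hv, hvx, hvy, hvΔ⟩ := hint
      set w1 := w.takeUntil v hv with hw1
      set w2 := w.dropUntil v hv with hw2
      have hspec := w.take_spec hv
      have hlen : w1.length + w2.length = w.length := by
        conv_rhs => rw [← hspec]
        rw [Walk.length_append]
      have hl1 : 1 ≤ w1.length := by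
        by_contra h
        push_neg at h
        interval_cases h' : w1.length
        · exact hvx (Walk.eq_of_length_eq_zero h').symm
      have hl2 : 1 ≤ w2.length := by
        by_contra h
        push_neg at h
        interval_cases h' : w2.length
        · exact hvy (Walk.eq_of_length_eq_zero h')
      obtain ⟨p1, hp1⟩ := ih x v hx hvΔ w1 (by omega)
      obtain ⟨p2, hp2⟩ := ih v y hvΔ hy w2 (by omega)
      refine ⟨p1.append p2, ?_⟩
      intro u hu
      rcases (Walk.mem_support_append_iff _ _).mp hu with h | h
      · exact hp1 u h
      · exact hp2 u h

/-- If `Δ` has boundary width at most `κ` in a connected graph `Γ`, then any two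
vertices of `Δ` joined by a path in `Γ` are joined by a path all of whose vertices
lie in the ball cover `Δ_κ`. -/
theorem connected_ballCover_of_boundaryWidth {V : Type*} (G : SimpleGraph V)
    (hG : G.Connected) (Δ : Set V) (κ : ℕ)
    (hκ : ∀ x y : V, x ∈ Δ → y ∈ Δ → ∀ w : G.Walk x y,
      (∀ v ∈ w.support, v ≠ x → v ≠ y → v ∉ Δ) → G.dist x y ≤ κ) :
    ∀ x y : V, x ∈ Δ → y ∈ Δ → G.Reachable x y →
      ∃ w : G.Walk x y, ∀ v ∈ w.support, v ∈ {u : V | ∃ t ∈ Δ, G.dist u t ≤ κ} := by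
  intro x y hx hy hr
  obtain ⟨w⟩ := hr
  exact aux_ballCover G Δ κ hκ w.length x y hx hy w le_rfl
end

section
/- Let U and V be monoids and let S = U ∗ V be their monoid free product (coproduct of monoids). If the group of units of V is trivial, then the group of units of S is (the canonical image of) the group of units of U; in particular, every unit of S lies in the image of U. -/
/-!
Write elements of a free product as reduced words. If `a` and `b` are reduced words with
`a * b = 1`, then the last letter of `a` and the first letter of `b` lie in the same factor and
multiply to `1`, since otherwise `a ++ b`, with those two letters merged, would be a nonempty
reduced word representing `1`. Peeling letters off, `a * b = 1` pairs the letters of `a` from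
the right with those of `b` from the left, each pair multiplying to `1`. Applied to `s * t = 1`
and `t * s = 1` for a unit `s` with inverse `t`, this makes every letter of `s` a unit of its
factor. Letters from `V` are then impossible, and since consecutive letters come from different
factors, `s` is a single unit of `U` (or `1`).
-/

open Monoid

namespace Monoid.CoprodI

variable {ι : Type*} {M : ι → Type*} [∀ i, Monoid (M i)]

def Reduced (l : List (Σ i, M i)) : Prop :=
  (∀ x ∈ l, x.2 ≠ 1) ∧ l.IsChain fun x y => x.1 ≠ y.1

def listProd (l : List (Σ i, M i)) : CoprodI M :=
  (l.map fun x => of x.2).prod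

@[simp] theorem listProd_nil : listProd ([] : List (Σ i, M i)) = 1 := rfl

@[simp] theorem listProd_append (l₁ l₂ : List (Σ i, M i)) :
    listProd (l₁ ++ l₂) = listProd l₁ * listProd l₂ := by
  simp [listProd]

@[simp] theorem listProd_cons (x : Σ i, M i) (l : List (Σ i, M i)) :
    listProd (x :: l) = of x.2 * listProd l := by
  simp [listProd]

theorem reduced_singleton {x : Σ i, M i} : Reduced [x] ↔ x.2 ≠ 1 := by
  simp [Reduced]

theorem reduced_append {l₁ l₂ : List (Σ i, M i)} :
    Reduced (l₁ ++ l₂) ↔ Reduced l₁ ∧ Reduced l₂ ∧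
      ∀ x ∈ l₁.getLast?, ∀ y ∈ l₂.head?, x.1 ≠ y.1 := by
  simp only [Reduced, List.mem_append, List.isChain_append]
  grind

theorem Reduced.eq_nil_of_listProd_eq_one {l : List (Σ i, M i)} (hl : Reduced l)
    (h : listProd l = 1) : l = [] := by
  classical
  exact congrArg Word.toList
    (Word.equiv.symm.injective (a₁ := ⟨l, hl.1, hl.2⟩) (a₂ := Word.empty) h)

theorem Word.reduced_toList (w : Word M) : Reduced w.toList := ⟨w.ne_one, w.chain_ne⟩

inductive MulEqOne : (Σ i, M i) → (Σ i, M i) → Prop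
  | mk {i : ι} {m n : M i} : m * n = 1 → MulEqOne ⟨i, m⟩ ⟨i, n⟩

theorem MulEqOne.isUnit_snd {x y : Σ i, M i} (h₁ : MulEqOne x y) (h₂ : MulEqOne y x) :
    IsUnit x.2 := by
  cases h₁ with
  | mk hmn => cases h₂ with
    | mk hnm => exact isUnit_iff_exists.mpr ⟨_, hmn, hnm⟩

theorem Reduced.forall₂_mulEqOne_of_listProd_mul_eq_one {a b : List (Σ i, M i)}
    (ha : Reduced a) (hb : Reduced b) (h : listProd a * listProd b = 1) :
    List.Forall₂ MulEqOne a.reverse b := by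
  induction a using List.reverseRecOn generalizing b with
  | nil => simp [hb.eq_nil_of_listProd_eq_one (by simpa using h)]
  | append_singleton a x ih =>
    obtain ⟨ha', -, hax⟩ := reduced_append.mp ha
    cases b with
    | nil => simpa using ha.eq_nil_of_listProd_eq_one (by simpa using h)
    | cons y b =>
      obtain ⟨-, hb', hyb⟩ := (reduced_append (l₁ := [y])).mp hb
      obtain ⟨i, m⟩ := x
      obtain ⟨j, n⟩ := y
      by_cases hij : i = j
      · subst hij
        by_cases hmn : m * n = 1
        · have hab : listProd a * listProd b = 1 := by
            rw [← h]
            simp only [listProd_append, listProd_cons, listProd_nil, mul_one, mul_assoc,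
              ← mul_assoc (of m), ← map_mul, hmn, map_one, one_mul]
          simpa using List.Forall₂.cons (MulEqOne.mk hmn) (ih ha' hb' hab)
        · have hmerged : Reduced (a ++ [⟨i, m * n⟩] ++ b) :=
            reduced_append.mpr ⟨reduced_append.mpr ⟨ha', reduced_singleton.mpr hmn,
              by simpa using hax⟩, hb', by simpa using hyb⟩
          refine absurd (hmerged.eq_nil_of_listProd_eq_one ?_) (by simp)
          rw [← h]
          simp only [listProd_append, listProd_cons, listProd_nil, mul_one, mul_assoc, map_mul]
      · have hconcat : Reduced (a ++ [⟨i, m⟩] ++ ⟨j, n⟩ :: b) :=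
          reduced_append.mpr ⟨ha, hb, by simpa using hij⟩
        exact absurd (hconcat.eq_nil_of_listProd_eq_one (by simpa [mul_assoc] using h)) (by simp)

section Word

variable [DecidableEq ι] [∀ i, DecidableEq (M i)]

theorem Word.forall₂_mulEqOne_of_mul_eq_one {s t : CoprodI M} (h : s * t = 1) :
    List.Forall₂ MulEqOne (Word.equiv s).toList.reverse (Word.equiv t).toList := by
  have hprod (r : CoprodI M) : listProd (Word.equiv r).toList = r :=
    Word.equiv.symm_apply_apply r
  exact (reduced_toList _).forall₂_mulEqOne_of_listProd_mul_eq_one (reduced_toList _)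
    (by rwa [hprod, hprod])

theorem isUnit_snd_of_mem_of_isUnit {s : CoprodI M} (hs : IsUnit s) {x : Σ i, M i}
    (hx : x ∈ (Word.equiv s).toList) : IsUnit x.2 := by
  obtain ⟨t, hst, hts⟩ := isUnit_iff_exists.mp hs
  have hts' : List.Forall₂ (flip MulEqOne) (Word.equiv s).toList.reverse (Word.equiv t).toList :=
    .flip (by simpa using List.rel_reverse (Word.forall₂_mulEqOne_of_mul_eq_one hts))
  have hunits := (List.forall₂_and_left _ _).mp <|
    (Word.forall₂_mulEqOne_of_mul_eq_one hst).mp (S := fun x _ => IsUnit x.2 ∧ True)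
      (fun _ _ h₁ h₂ => ⟨h₁.isUnit_snd h₂, trivial⟩) hts'
  exact hunits.1 x (List.mem_reverse.mpr hx)

end Word

theorem exists_isUnit_of_eq_of_isUnit {i : ι}
    (htriv : ∀ j ≠ i, ∀ m : M j, IsUnit m → m = 1) {s : CoprodI M} (hs : IsUnit s) :
    ∃ m : M i, IsUnit m ∧ of m = s := by
  classical
  have hfst : ∀ x ∈ (Word.equiv s).toList, x.1 = i := fun x hx =>
    by_contra fun hxi => (Word.equiv s).ne_one x hx
      (htriv x.1 hxi x.2 (isUnit_snd_of_mem_of_isUnit hs hx))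
  have hs' : listProd (Word.equiv s).toList = s := Word.equiv.symm_apply_apply s
  rcases hw : (Word.equiv s).toList with _ | ⟨⟨j, m⟩, _ | ⟨y, l⟩⟩
  · exact ⟨1, isUnit_one, by rw [map_one, ← hs', hw, listProd_nil]⟩
  · obtain rfl : j = i := hfst ⟨j, m⟩ (by simp [hw])
    refine ⟨m, isUnit_snd_of_mem_of_isUnit hs (x := ⟨j, m⟩) (by simp [hw]), ?_⟩
    rw [← hs', hw, listProd_cons, listProd_nil, mul_one]
  · have hchain := (Word.equiv s).chain_ne
    rw [hw, List.isChain_cons_cons] at hchain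
    exact absurd ((hfst _ (by simp [hw])).trans (hfst y (by simp [hw])).symm) hchain.1

end Monoid.CoprodI

namespace Monoid.Coprod

universe u v

/-- `Monoid.CoprodI` needs all factors in one universe, hence the `ULift`s. -/
def boolFamily (U : Type u) (V : Type v) : Bool → Type max u v
  | true => ULift.{v} U
  | false => ULift.{u} V

instance instMonoidBoolFamily (U : Type u) (V : Type v) [Monoid U] [Monoid V] :
    ∀ b, Monoid (boolFamily U V b)
  | true => inferInstanceAs (Monoid (ULift U))
  | false => inferInstanceAs (Monoid (ULift V))

variable {U : Type u} {V : Type v} [Monoid U] [Monoid V]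

def toCoprodI : Coprod U V →* CoprodI (boolFamily U V) :=
  lift ((CoprodI.of (i := true)).comp MulEquiv.ulift.symm.toMonoidHom)
    ((CoprodI.of (i := false)).comp MulEquiv.ulift.symm.toMonoidHom)

def ofCoprodI : CoprodI (boolFamily U V) →* Coprod U V :=
  CoprodI.lift fun
    | true => inl.comp MulEquiv.ulift.toMonoidHom
    | false => inr.comp MulEquiv.ulift.toMonoidHom

theorem ofCoprodI_toCoprodI (s : Coprod U V) : ofCoprodI (toCoprodI s) = s :=
  DFunLike.congr_fun (hom_ext (f := ofCoprodI.comp toCoprodI) (g := .id _)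
    (by ext; rfl) (by ext; rfl)) s

end Monoid.Coprod

/-- If `V` has trivial group of units, then the units of the free product `U ∗ V`
are exactly the images of the units of `U` under the canonical embedding. -/
theorem units_of_coprod_of_trivial_units {U V : Type*} [Monoid U] [Monoid V]
    (hV : ∀ v : V, IsUnit v → v = 1) :
    ∀ s : Coprod U V, IsUnit s ↔ ∃ u : U, IsUnit u ∧ Coprod.inl u = s := by
  intro s
  refine ⟨fun hs => ?_, fun ⟨u, hu, hus⟩ => hus ▸ hu.map Coprod.inl⟩
  have htriv : ∀ b ≠ true, ∀ m : Coprod.boolFamily U V b, IsUnit m → m = 1 := by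
    rintro (_ | _) hb m hm
    · exact ULift.ext _ _ (hV m.down (hm.map (MulEquiv.ulift : ULift V ≃* V)))
    · exact absurd rfl hb
  obtain ⟨m, hm, hms⟩ := CoprodI.exists_isUnit_of_eq_of_isUnit htriv (hs.map Coprod.toCoprodI)
  refine ⟨m.down, hm.map (MulEquiv.ulift : ULift U ≃* U), ?_⟩
  rw [← Coprod.ofCoprodI_toCoprodI s, ← hms, Coprod.ofCoprodI, CoprodI.lift_of]
  rfl
end
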